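/- Let n ≥ 3 and let M : Fin n → Fin n → Bool be an absorbing state of the binary trust gossip model. If an agent i has at least one outgoing one-way trust relation (i ▷ j for some j), then i receives no trust from any agent at all: for every agent k ≠ i, M k i = false. -/

import Mathlib

/-- A state `M` is absorbing if for all pairwise distinct agents `a z y`,
if `z` trusts `a` then `z` already agrees with `a` about `y`. -/
def Absorbing {n : ℕ} (M : Fin n → Fin n → Bool) : Prop :=
  ∀ a z y : Fin n, a ≠ z → a ≠ y → z ≠ y → M z a = true → M z y = M a y

theorem Absorbing.trust_trans {n : ℕ} {M : Fin n → Fin n → Bool} (habs : Absorbing M)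
    {k a y : Fin n} (hka : k ≠ a) (hay : a ≠ y) (hky : k ≠ y)
    (hk : M k a = true) (ha : M a y = true) : M k y = true :=
  (habs a k y hka.symm hay hky hk).trans ha

theorem peripheral_receives_no_trust_general {n : ℕ} (M : Fin n → Fin n → Bool)
    (habs : Absorbing M)
    (i j : Fin n) (hij : i ≠ j)
    (hout : M i j = true ∧ M j i = false) :
    ∀ k : Fin n, k ≠ i → M k i = false := by
  intro k hki
  by_contra hk
  rw [Bool.not_eq_false] at hk
  have hkj : k ≠ j := by
    rintro rfl
    simp [hk] at hout
  -- `k` trusts `j` through `i`, so it must share `j`'s distrust of `i`.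
  have hkj_trust : M k j = true := habs.trust_trans hki hij hkj hk hout.1
  have hagree : M k i = M j i := habs j k i hkj.symm hij.symm hki hkj_trust
  simp [hk, hout.2] at hagree

/-- In an absorbing state, a peripheral agent (one with an outgoing one-way
trust relation) receives no trust from any other agent. -/
theorem peripheral_receives_no_trust {n : ℕ} (hn : 3 ≤ n) (M : Fin n → Fin n → Bool)
    (hdiag : ∀ i, M i i = false) (habs : Absorbing M)
    (i j : Fin n) (hij : i ≠ j)
    (hout : M i j = true ∧ M j i = false) :
    ∀ k : Fin n, k ≠ i → M k i = false :=
  peripheral_receives_no_trust_general M habs i j hij hout
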